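/- For the cubic δ(τ) = (v/(2T²))τ³ − (3v/(2T))τ² + vτ with T > 0 and v ≥ 0, the maximum of |δ(τ)| over τ ∈ [0, T] equals (√3/9)·T·v, attained at τ* = T(1 − √3/3). -/

import Mathlib

/-!
Up to the factor `v / (2 T²)`, `δ τ` is the cubic `τ (T - τ) (2T - τ)`, which is nonnegative on
`[0, T]`. Its maximum there is read off the identity
`2√3/9 · T³ - τ (T - τ) (2T - τ) = (τ - τ*)² (T (1 + 2√3/3) - τ)` with `τ* = T (1 - √3/3)`:
the right-hand side is nonnegative for `τ ≤ T` and vanishes at `τ*`.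
-/

open Real

lemma two_sqrt_three_div_nine_mul_pow_three_sub (T τ : ℝ) :
    2 * √3 / 9 * T ^ 3 - τ * (T - τ) * (2 * T - τ)
      = (τ - T * (1 - √3 / 3)) ^ 2 * (T * (1 + 2 * √3 / 3) - τ) := by
  linear_combination (T ^ 3 / 3 - T ^ 2 * τ / 3 - 2 * √3 * T ^ 3 / 27) *
    Real.sq_sqrt (show (0 : ℝ) ≤ 3 by norm_num)

lemma mul_sub_mul_two_mul_sub_le {T τ : ℝ} (hτ : τ ≤ T * (1 + 2 * √3 / 3)) :
    τ * (T - τ) * (2 * T - τ) ≤ 2 * √3 / 9 * T ^ 3 := by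
  have h := two_sqrt_three_div_nine_mul_pow_three_sub T τ
  nlinarith [mul_nonneg (sq_nonneg (τ - T * (1 - √3 / 3))) (sub_nonneg.2 hτ)]

lemma mul_sub_mul_two_mul_sub_at_critical (T : ℝ) :
    T * (1 - √3 / 3) * (T - T * (1 - √3 / 3)) * (2 * T - T * (1 - √3 / 3))
      = 2 * √3 / 9 * T ^ 3 := by
  have h := two_sqrt_three_div_nine_mul_pow_three_sub T (T * (1 - √3 / 3))
  rw [sub_self, zero_pow two_ne_zero, zero_mul] at h
  linarith

lemma cubic_eq_div_mul {T : ℝ} (hT : T ≠ 0) (v τ : ℝ) :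
    v / (2 * T ^ 2) * τ ^ 3 - 3 * v / (2 * T) * τ ^ 2 + v * τ
      = v / (2 * T ^ 2) * (τ * (T - τ) * (2 * T - τ)) := by
  field_simp
  ring

lemma sqrt_three_le_three : √3 ≤ 3 := by
  rw [Real.sqrt_le_left (by norm_num)]
  norm_num

theorem stmt_8 (T v : ℝ) (hT : 0 < T) (hv : 0 ≤ v)
    (δ : ℝ → ℝ)
    (hδ : δ = fun τ => v / (2 * T ^ 2) * τ ^ 3 - 3 * v / (2 * T) * τ ^ 2 + v * τ) :
    (∀ τ ∈ Set.Icc (0:ℝ) T, |δ τ| ≤ Real.sqrt 3 / 9 * T * v) ∧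
    T * (1 - Real.sqrt 3 / 3) ∈ Set.Icc (0:ℝ) T ∧
    |δ (T * (1 - Real.sqrt 3 / 3))| = Real.sqrt 3 / 9 * T * v := by
  have hδ_factor : ∀ τ, δ τ = v / (2 * T ^ 2) * (τ * (T - τ) * (2 * T - τ)) := fun τ => by
    subst hδ; exact cubic_eq_div_mul hT.ne' v τ
  have hc : 0 ≤ v / (2 * T ^ 2) := by positivity
  have hpeak : v / (2 * T ^ 2) * (2 * √3 / 9 * T ^ 3) = √3 / 9 * T * v := by
    field_simp
  refine ⟨fun τ ⟨h0, h1⟩ => ?_, ⟨?_, ?_⟩, ?_⟩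
  · have hnonneg : 0 ≤ τ * (T - τ) * (2 * T - τ) := by
      apply mul_nonneg (mul_nonneg h0 _) <;> linarith
    have hle := mul_sub_mul_two_mul_sub_le (show τ ≤ T * (1 + 2 * √3 / 3) by
      nlinarith [Real.sqrt_nonneg 3])
    rw [hδ_factor, abs_of_nonneg (mul_nonneg hc hnonneg), ← hpeak]
    exact mul_le_mul_of_nonneg_left hle hc
  · nlinarith [sqrt_three_le_three]
  · nlinarith [Real.sqrt_nonneg 3]
  · rw [hδ_factor, mul_sub_mul_two_mul_sub_at_critical, hpeak]
    exact abs_of_nonneg (by positivity)
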